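/- Suboptimality of slow progress for Nemirovski's function: let f(x) = max_{i∈[N]} {x_i − 4r·i} on the ball B_R(0) ⊂ ℝ^d with d > N. For any x ∈ B_R(0) with i⁺_r(x) ≤ N (i.e., |x_j| ≤ r for all j ≥ N), f(x) − inf_{z∈B_R(0)} f(z) ≥ R/√N − 4Nr. -/
import Mathlib


/-- The (1-indexed) progress index: the smallest `i ≥ 1` such that every coordinate of
`x` with (1-indexed) index at least `i` has magnitude at most `r`. -/
noncomputable def iplus (d : ℕ) (r : ℝ) (x : Fin d → ℝ) : ℕ :=
  sInf {i : ℕ | 1 ≤ i ∧ ∀ j : Fin d, i ≤ (j : ℕ) + 1 → |x j| ≤ r}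

/-- Nemirovski's function `max_{i ∈ [N]} (x_i − 4 r i)` (1-indexed). -/
noncomputable def nemF (d N : ℕ) (hN : 0 < N) (hNd : N ≤ d) (r : ℝ) (x : Fin d → ℝ) : ℝ :=
  Finset.univ.sup' (Finset.univ_nonempty_iff.mpr ⟨⟨0, hN⟩⟩)
    (fun i : Fin N => x (Fin.castLE hNd i) - 4 * r * ((i : ℕ) + 1))

/-- Suboptimality of slow progress for Nemirovski's function: any point of the ball
`B_R(0)` with progress index at most `N` is at least `R/√N − 4Nr` suboptimal. -/
theorem stmt18 (d N : ℕ) (hN : 0 < N) (hNd : N < d) (r R : ℝ) (hr : 0 < r) (hR : 0 < R)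
    (x : Fin d → ℝ) (hx : Real.sqrt (∑ i, x i ^ 2) ≤ R) (hprog : iplus d r x ≤ N) :
    R / Real.sqrt N - 4 * N * r ≤
      nemF d N hN hNd.le r x -
        sInf ((fun z => nemF d N hN hNd.le r z) ''
          {z : Fin d → ℝ | Real.sqrt (∑ i, z i ^ 2) ≤ R}) := by
  have hNpos : (0:ℝ) < N := by exact_mod_cast hN
  have hsN : (0:ℝ) < Real.sqrt N := Real.sqrt_pos.mpr hNpos
  set c := R / Real.sqrt N with hc
  have hcpos : 0 < c := div_pos hR hsN
  -- Step 1: |x ⟨N-1⟩| ≤ r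
  have hmem : iplus d r x ∈
      {i : ℕ | 1 ≤ i ∧ ∀ j : Fin d, i ≤ (j : ℕ) + 1 → |x j| ≤ r} := by
    apply Nat.sInf_mem
    refine ⟨d + 1, by omega, fun j hj => absurd hj (by have := j.isLt; omega)⟩
  obtain ⟨-, h2⟩ := hmem
  have hNd' : N - 1 < d := by omega
  have hxN : |x ⟨N - 1, hNd'⟩| ≤ r := h2 ⟨N - 1, hNd'⟩ (by simp; omega)
  -- Step 2: lower bound on f(x)
  have hfx : -r - 4 * N * r ≤ nemF d N hN hNd.le r x := by
    have hlt : N - 1 < N := by omega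
    have h := Finset.le_sup'
      (fun i : Fin N => x (Fin.castLE hNd.le i) - 4 * r * ((i : ℕ) + 1))
      (Finset.mem_univ (⟨N - 1, hlt⟩ : Fin N))
    have hcast : (Fin.castLE hNd.le (⟨N - 1, hlt⟩ : Fin N)) = ⟨N - 1, hNd'⟩ := rfl
    have hval : (((⟨N - 1, hlt⟩ : Fin N) : ℕ) : ℝ) + 1 = (N : ℝ) := by
      have : ((⟨N - 1, hlt⟩ : Fin N) : ℕ) + 1 = N := by simp; omega
      exact_mod_cast this
    rw [hcast, hval] at h
    have hx1 : -r ≤ x ⟨N - 1, hNd'⟩ := neg_le_of_abs_le hxN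
    refine le_trans ?_ h
    nlinarith
  -- Step 3: witness point z
  set z : Fin d → ℝ := fun j => if (j : ℕ) < N then -c else 0 with hz
  have hsum : ∑ i, z i ^ 2 = N * c ^ 2 := by
    have : ∀ i : Fin d, z i ^ 2 = if (i : ℕ) < N then c ^ 2 else 0 := by
      intro i; by_cases h : (i : ℕ) < N <;> simp [hz, h]
    rw [Finset.sum_congr rfl (fun i _ => this i), Finset.sum_ite,
      Finset.sum_const, Finset.sum_const_zero, add_zero]
    have hcard : (Finset.univ.filter fun i : Fin d => (i : ℕ) < N).card = N := by
      have : (Finset.univ.filter fun i : Fin d => (i : ℕ) < N)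
          = Finset.Iio (⟨N, hNd⟩ : Fin d) := by
        ext i; simp [Fin.lt_def]
      rw [this, Fin.card_Iio]
    rw [hcard]; simp [mul_comm]
  have hzball : Real.sqrt (∑ i, z i ^ 2) ≤ R := by
    rw [hsum]
    have : (N : ℝ) * c ^ 2 = R ^ 2 := by
      rw [hc]; rw [div_pow, Real.sq_sqrt hNpos.le]; field_simp
    rw [this, Real.sqrt_sq hR.le]
  -- f(z) ≤ -c - 4r
  have hfz : nemF d N hN hNd.le r z ≤ -c - 4 * r := by
    apply Finset.sup'_le
    intro i _
    have hzi : z (Fin.castLE hNd.le i) = -c := by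
      simp [hz, i.isLt]
    rw [hzi]
    have h1 : (0:ℝ) ≤ (i : ℕ) := Nat.cast_nonneg _
    nlinarith
  -- Step 4: bddBelow
  have hbdd : BddBelow ((fun z => nemF d N hN hNd.le r z) ''
      {z : Fin d → ℝ | Real.sqrt (∑ i, z i ^ 2) ≤ R}) := by
    refine ⟨-R - 4 * r, ?_⟩
    rintro y ⟨w, hw, rfl⟩
    simp only [Set.mem_setOf_eq] at hw
    have hsum_le : ∑ i, w i ^ 2 ≤ R ^ 2 := by
      have h1 : (0:ℝ) ≤ ∑ i, w i ^ 2 := Finset.sum_nonneg fun i _ => sq_nonneg _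
      nlinarith [Real.sq_sqrt h1, Real.sqrt_nonneg (∑ i, w i ^ 2), hw]
    have hterm : w (Fin.castLE hNd.le ⟨0, hN⟩) ^ 2 ≤ R ^ 2 :=
      le_trans (Finset.single_le_sum (fun i _ => sq_nonneg (w i)) (Finset.mem_univ _))
        hsum_le
    have hw0 : -R ≤ w (Fin.castLE hNd.le ⟨0, hN⟩) := by nlinarith
    have h := Finset.le_sup'
      (fun i : Fin N => w (Fin.castLE hNd.le i) - 4 * r * ((i : ℕ) + 1))
      (Finset.mem_univ (⟨0, hN⟩ : Fin N))
    simp only at h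
    refine le_trans ?_ h
    simp only [Fin.val_mk, Nat.cast_zero, zero_add, mul_one]
    linarith
  have hsinf : sInf ((fun z => nemF d N hN hNd.le r z) ''
      {z : Fin d → ℝ | Real.sqrt (∑ i, z i ^ 2) ≤ R}) ≤ -c - 4 * r :=
    le_trans (csInf_le hbdd ⟨z, hzball, rfl⟩) hfz
  linarith
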